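/- Let {Aᵢ : i ∈ I} be a family of non-trivial Abelian linearly ordered groups with |I| > 1 such that for each i ∈ I and each a ∈ Aᵢ with a > 0 there exists a₀ ∈ Aᵢ with 0 < a₀ < a. Let A = ∏_{i∈I} Aᵢ be endowed with the strict product ordering, and let G be a non-Abelian directed po-group with RDP₁. Then the lexicographic product A ×⃗ G satisfies RDP but RDP₁ fails in it. -/

import Mathlib

/-!
In `A ×ₗ G` an element is positive iff its `A`-part is strictly positive, or its `A`-part is `0`
and its `G`-part is positive. For RDP one refines the `A`-parts first. If all four are strictly
positive, density of the `Aᵢ` gives a refinement by strictly positive elements, after which the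
`G`-parts are unconstrained. If the `A`-parts give `a₁ < b₁` (or `b₁ < a₁`), the refinement
`a₁, 0, -a₁ + b₁, b₂` works. Otherwise the `A`-parts of `a₁, b₁` (or of `a₂, b₂`) vanish; adding
a common upper bound of the negatives of the other two `G`-parts makes them positive, so RDP of `G`
applies, and the translation is undone in a single entry.

RDP₁ fails because, for incomparable positive `a, b ∈ A`, every refinement of `a + b = b + a` has
nonzero, hence strictly positive, off-diagonal entries. Then `c₁₂` and `c₂₁` lie above all of
`{0} × G⁺`, which contains two elements that do not commute.
-/

/-- A po-group satisfies RDP if every equation `a₁ + a₂ = b₁ + b₂` of positive elements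
admits a Riesz decomposition by four positive elements. -/
def RDP (G : Type*) [AddGroup G] [PartialOrder G] : Prop :=
  ∀ a₁ a₂ b₁ b₂ : G, 0 ≤ a₁ → 0 ≤ a₂ → 0 ≤ b₁ → 0 ≤ b₂ → a₁ + a₂ = b₁ + b₂ →
    ∃ c₁₁ c₁₂ c₂₁ c₂₂ : G, 0 ≤ c₁₁ ∧ 0 ≤ c₁₂ ∧ 0 ≤ c₂₁ ∧ 0 ≤ c₂₂ ∧
      a₁ = c₁₁ + c₁₂ ∧ a₂ = c₂₁ + c₂₂ ∧ b₁ = c₁₁ + c₂₁ ∧ b₂ = c₁₂ + c₂₂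

/-- A po-group satisfies RDP₁ if every equation `a₁ + a₂ = b₁ + b₂` of positive elements
admits a Riesz decomposition `c₁₁, c₁₂, c₂₁, c₂₂ ≥ 0` in which any `0 ≤ x ≤ c₁₂` and
`0 ≤ y ≤ c₂₁` commute. -/
def RDP1 (G : Type*) [AddGroup G] [PartialOrder G] : Prop :=
  ∀ a₁ a₂ b₁ b₂ : G, 0 ≤ a₁ → 0 ≤ a₂ → 0 ≤ b₁ → 0 ≤ b₂ → a₁ + a₂ = b₁ + b₂ →
    ∃ c₁₁ c₁₂ c₂₁ c₂₂ : G, 0 ≤ c₁₁ ∧ 0 ≤ c₁₂ ∧ 0 ≤ c₂₁ ∧ 0 ≤ c₂₂ ∧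
      a₁ = c₁₁ + c₁₂ ∧ a₂ = c₂₁ + c₂₂ ∧ b₁ = c₁₁ + c₂₁ ∧ b₂ = c₁₂ + c₂₂ ∧
      ∀ x y : G, 0 ≤ x → x ≤ c₁₂ → 0 ≤ y → y ≤ c₂₁ → x + y = y + x

/-- The direct product `∏ i, A i` regarded with the strict product ordering. -/
def StrictPi {I : Type*} (A : I → Type*) : Type _ := ∀ i, A i

instance {I : Type*} (A : I → Type*) [∀ i, AddCommGroup (A i)] :
    AddCommGroup (StrictPi A) :=
  inferInstanceAs (AddCommGroup (∀ i, A i))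

/-- The strict product ordering: `(aⁱ) ≦ (bⁱ)` iff `aⁱ = bⁱ` for all `i`, or
`aⁱ < bⁱ` for all `i`. -/
instance {I : Type*} (A : I → Type*) [∀ i, PartialOrder (A i)] :
    PartialOrder (StrictPi A) where
  le x y := x = y ∨ ∀ i, x i < y i
  le_refl x := Or.inl rfl
  le_trans x y z hxy hyz := by
    rcases hxy with rfl | hxy
    · exact hyz
    · rcases hyz with rfl | hyz
      · exact Or.inr hxy
      · exact Or.inr fun i => lt_trans (hxy i) (hyz i)
  le_antisymm x y hxy hyx := by
    rcases hxy with rfl | hxy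
    · rfl
    · rcases hyx with rfl | hyx
      · rfl
      · exact funext fun i => absurd (hyx i) (lt_asymm (hxy i))

section Refinement

variable {G : Type*} [AddGroup G]

def IsRefinement (a₁ a₂ b₁ b₂ c₁₁ c₁₂ c₂₁ c₂₂ : G) : Prop :=
  a₁ = c₁₁ + c₁₂ ∧ a₂ = c₂₁ + c₂₂ ∧ b₁ = c₁₁ + c₂₁ ∧ b₂ = c₁₂ + c₂₂

theorem IsRefinement.transpose {a₁ a₂ b₁ b₂ c₁₁ c₁₂ c₂₁ c₂₂ : G}
    (h : IsRefinement a₁ a₂ b₁ b₂ c₁₁ c₁₂ c₂₁ c₂₂) :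
    IsRefinement b₁ b₂ a₁ a₂ c₁₁ c₂₁ c₁₂ c₂₂ :=
  ⟨h.2.2.1, h.2.2.2, h.1, h.2.1⟩

theorem isRefinement_of_add_eq {a₁ a₂ b₁ b₂ : G} (h : a₁ + a₂ = b₁ + b₂) :
    IsRefinement a₁ a₂ b₁ b₂ a₁ 0 (-a₁ + b₁) b₂ :=
  ⟨(add_zero a₁).symm, by rw [add_assoc, ← h, neg_add_cancel_left],
    (add_neg_cancel_left a₁ b₁).symm, (zero_add b₂).symm⟩

variable [PartialOrder G]

def HasRieszDecomp (a₁ a₂ b₁ b₂ : G) : Prop :=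
  ∃ c₁₁ c₁₂ c₂₁ c₂₂ : G, 0 ≤ c₁₁ ∧ 0 ≤ c₁₂ ∧ 0 ≤ c₂₁ ∧ 0 ≤ c₂₂ ∧
    IsRefinement a₁ a₂ b₁ b₂ c₁₁ c₁₂ c₂₁ c₂₂

theorem hasRieszDecomp_comm {a₁ a₂ b₁ b₂ : G} :
    HasRieszDecomp a₁ a₂ b₁ b₂ ↔ HasRieszDecomp b₁ b₂ a₁ a₂ :=
  ⟨fun ⟨_, _, _, _, h₁₁, h₁₂, h₂₁, h₂₂, h⟩ => ⟨_, _, _, _, h₁₁, h₂₁, h₁₂, h₂₂, h.transpose⟩,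
    fun ⟨_, _, _, _, h₁₁, h₁₂, h₂₁, h₂₂, h⟩ => ⟨_, _, _, _, h₁₁, h₂₁, h₁₂, h₂₂, h.transpose⟩⟩

theorem hasRieszDecomp_of_add_eq {a₁ a₂ b₁ b₂ : G} (h : a₁ + a₂ = b₁ + b₂) (ha₁ : 0 ≤ a₁)
    (hb₂ : 0 ≤ b₂) (hab : 0 ≤ -a₁ + b₁) : HasRieszDecomp a₁ a₂ b₁ b₂ :=
  ⟨_, _, _, _, ha₁, le_rfl, hab, hb₂, isRefinement_of_add_eq h⟩

def StrictRDP (G : Type*) [AddGroup G] [PartialOrder G] : Prop :=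
  ∀ a₁ a₂ b₁ b₂ : G, 0 < a₁ → 0 < a₂ → 0 < b₁ → 0 < b₂ → a₁ + a₂ = b₁ + b₂ →
    ∃ c₁₁ c₁₂ c₂₁ c₂₂ : G, 0 < c₁₁ ∧ 0 < c₁₂ ∧ 0 < c₂₁ ∧ 0 < c₂₂ ∧
      IsRefinement a₁ a₂ b₁ b₂ c₁₁ c₁₂ c₂₁ c₂₂

theorem RDP1.rdp (hG : RDP1 G) : RDP G := fun a₁ a₂ b₁ b₂ ha₁ ha₂ hb₁ hb₂ h =>
  let ⟨c₁₁, c₁₂, c₂₁, c₂₂, h₁₁, h₁₂, h₂₁, h₂₂, e₁, e₂, e₃, e₄, _⟩ :=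
    hG a₁ a₂ b₁ b₂ ha₁ ha₂ hb₁ hb₂ h
  ⟨c₁₁, c₁₂, c₂₁, c₂₂, h₁₁, h₁₂, h₂₁, h₂₂, e₁, e₂, e₃, e₄⟩

theorem pos_of_incomparable [AddLeftMono G] {a b c₁₁ c₁₂ c₂₁ : G} (h₁₂ : 0 ≤ c₁₂)
    (h₂₁ : 0 ≤ c₂₁) (ha : a = c₁₁ + c₁₂) (hb : b = c₁₁ + c₂₁) (hab : ¬a ≤ b) (hba : ¬b ≤ a) :
    0 < c₁₂ ∧ 0 < c₂₁ := by
  refine ⟨h₁₂.lt_of_ne ?_, h₂₁.lt_of_ne ?_⟩ <;> rintro rfl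
  · exact hab (by rw [ha, hb, add_zero]; exact le_add_of_nonneg_right h₂₁)
  · exact hba (by rw [ha, hb, add_zero]; exact le_add_of_nonneg_right h₁₂)

end Refinement

section DirectedGroup

variable {G : Type*} [AddGroup G] [PartialOrder G] [IsDirectedOrder G]

theorem exists_nonneg_sub_eq [AddLeftMono G] (g : G) :
    ∃ p n : G, 0 ≤ p ∧ 0 ≤ n ∧ p - n = g := by
  obtain ⟨p, hp, hg⟩ := exists_ge_ge 0 g
  exact ⟨p, -g + p, hp, le_neg_add_iff_le.2 hg, by
    rw [sub_eq_add_neg, neg_add_rev, neg_neg, add_neg_cancel_left]⟩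

theorem exists_nonneg_add_ne_add [AddLeftMono G] (h : ∃ x y : G, x + y ≠ y + x) :
    ∃ x y : G, 0 ≤ x ∧ 0 ≤ y ∧ x + y ≠ y + x := by
  by_contra! hc
  have hc' {a b : G} (ha : 0 ≤ a) (hb : 0 ≤ b) : AddCommute a b := hc a b ha hb
  obtain ⟨x, y, hxy⟩ := h
  obtain ⟨p, n, hp, hn, rfl⟩ := exists_nonneg_sub_eq x
  obtain ⟨p', n', hp', hn', rfl⟩ := exists_nonneg_sub_eq y
  simp only [sub_eq_add_neg] at hxy
  exact hxy (((hc' hp hp').add_right (hc' hp hn').neg_right).add_left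
    ((hc' hn hp').add_right (hc' hn hn').neg_right).neg_left)

theorem RDP.exists_refinement_of_nonneg_left [AddLeftMono G] (hG : RDP G) {g₁ g₂ h₁ h₂ : G}
    (hg₁ : 0 ≤ g₁) (hh₁ : 0 ≤ h₁) (h : g₁ + g₂ = h₁ + h₂) :
    ∃ d₁₁ d₁₂ d₂₁ d₂₂ : G, 0 ≤ d₁₁ ∧ 0 ≤ d₁₂ ∧ 0 ≤ d₂₁ ∧
      IsRefinement g₁ g₂ h₁ h₂ d₁₁ d₁₂ d₂₁ d₂₂ := by
  obtain ⟨e, hge, hhe⟩ := exists_ge_ge (-g₂) (-h₂)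
  have h' : g₁ + (g₂ + e) = h₁ + (h₂ + e) := by rw [← add_assoc, h, add_assoc]
  obtain ⟨d₁₁, d₁₂, d₂₁, d₂₂, h₁₁, h₁₂, h₂₁, -, e₁, e₂, e₃, e₄⟩ :=
    hG g₁ (g₂ + e) h₁ (h₂ + e) hg₁ (neg_le_iff_add_nonneg'.1 hge) hh₁
      (neg_le_iff_add_nonneg'.1 hhe) h'
  refine ⟨d₁₁, d₁₂, d₂₁, d₂₂ - e, h₁₁, h₁₂, h₂₁, e₁, ?_, e₃, ?_⟩
  · rw [← add_sub_assoc, ← e₂, add_sub_cancel_right]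
  · rw [← add_sub_assoc, ← e₄, add_sub_cancel_right]

theorem RDP.exists_refinement_of_nonneg_right [AddRightMono G] (hG : RDP G) {g₁ g₂ h₁ h₂ : G}
    (hg₂ : 0 ≤ g₂) (hh₂ : 0 ≤ h₂) (h : g₁ + g₂ = h₁ + h₂) :
    ∃ d₁₁ d₁₂ d₂₁ d₂₂ : G, 0 ≤ d₁₂ ∧ 0 ≤ d₂₁ ∧ 0 ≤ d₂₂ ∧
      IsRefinement g₁ g₂ h₁ h₂ d₁₁ d₁₂ d₂₁ d₂₂ := by
  obtain ⟨e, hge, hhe⟩ := exists_ge_ge (-g₁) (-h₁)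
  have h' : e + g₁ + g₂ = e + h₁ + h₂ := by rw [add_assoc, h, add_assoc]
  obtain ⟨d₁₁, d₁₂, d₂₁, d₂₂, -, h₁₂, h₂₁, h₂₂, e₁, e₂, e₃, e₄⟩ :=
    hG (e + g₁) g₂ (e + h₁) h₂ (neg_le_iff_add_nonneg.1 hge) hg₂
      (neg_le_iff_add_nonneg.1 hhe) hh₂ h'
  refine ⟨-e + d₁₁, d₁₂, d₂₁, d₂₂, h₁₂, h₂₁, h₂₂, ?_, e₂, ?_, e₄⟩
  · rw [add_assoc, ← e₁, neg_add_cancel_left]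
  · rw [add_assoc, ← e₃, neg_add_cancel_left]

end DirectedGroup

namespace Prod.Lex

variable {H G : Type*} [AddGroup H] [AddGroup G] {u v w x : H} {g g₁ g₂ h₁ h₂ : G}

theorem _root_.IsRefinement.toLex {q₁₁ q₁₂ q₂₁ q₂₂ : H} {d₁₁ d₁₂ d₂₁ d₂₂ : G}
    (hH : IsRefinement u v w x q₁₁ q₁₂ q₂₁ q₂₂) (hG : IsRefinement g₁ g₂ h₁ h₂ d₁₁ d₁₂ d₂₁ d₂₂) :
    IsRefinement (toLex (u, g₁)) (toLex (v, g₂)) (toLex (w, h₁)) (toLex (x, h₂))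
      (toLex (q₁₁, d₁₁)) (toLex (q₁₂, d₁₂)) (toLex (q₂₁, d₂₁)) (toLex (q₂₂, d₂₂)) := by
  obtain ⟨rfl, rfl, rfl, rfl⟩ := hH
  obtain ⟨rfl, rfl, rfl, rfl⟩ := hG
  exact ⟨rfl, rfl, rfl, rfl⟩

variable [PartialOrder H] [PartialOrder G]

theorem toLex_nonneg_iff : 0 ≤ toLex (u, g) ↔ 0 < u ∨ u = 0 ∧ 0 ≤ g :=
  (toLex_le_toLex (x := (0, 0))).trans (or_congr_right (and_congr_left' eq_comm))

theorem toLex_nonneg_of_pos (hu : 0 < u) (g : G) : 0 ≤ toLex (u, g) :=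
  toLex_nonneg_iff.2 (.inl hu)

theorem toLex_zero_nonneg_iff : 0 ≤ toLex ((0 : H), g) ↔ 0 ≤ g := by
  simp [toLex_nonneg_iff]

theorem toLex_nonneg (hu : 0 ≤ u) (hg : 0 ≤ g) : 0 ≤ toLex (u, g) := by
  rcases hu.lt_or_eq with hu | rfl
  exacts [toLex_nonneg_of_pos hu g, toLex_zero_nonneg_iff.2 hg]

theorem fst_nonneg {c : H ×ₗ G} (hc : 0 ≤ c) : 0 ≤ (ofLex c).1 := by
  rcases toLex_nonneg_iff.1 hc with h | ⟨h, -⟩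
  exacts [h.le, h.ge]

theorem hasRieszDecomp_of_fst_pos (hH : StrictRDP H) (hu : 0 < u) (hv : 0 < v) (hw : 0 < w)
    (hx : 0 < x) (huv : u + v = w + x) (hgh : g₁ + g₂ = h₁ + h₂) :
    HasRieszDecomp (toLex (u, g₁)) (toLex (v, g₂)) (toLex (w, h₁)) (toLex (x, h₂)) := by
  obtain ⟨q₁₁, q₁₂, q₂₁, q₂₂, h₁₁, h₁₂, h₂₁, h₂₂, hq⟩ := hH u v w x hu hv hw hx huv
  exact ⟨_, _, _, _, toLex_nonneg_of_pos h₁₁ _, toLex_nonneg_of_pos h₁₂ _,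
    toLex_nonneg_of_pos h₂₁ _, toLex_nonneg_of_pos h₂₂ _, hq.toLex (isRefinement_of_add_eq hgh)⟩

theorem hasRieszDecomp_of_pos_neg_add (ha₁ : 0 ≤ toLex (u, g₁)) (hb₂ : 0 ≤ toLex (x, h₂))
    (hab : toLex (u, g₁) + toLex (v, g₂) = toLex (w, h₁) + toLex (x, h₂)) (huw : 0 < -u + w) :
    HasRieszDecomp (toLex (u, g₁)) (toLex (v, g₂)) (toLex (w, h₁)) (toLex (x, h₂)) :=
  hasRieszDecomp_of_add_eq hab ha₁ hb₂ (toLex_nonneg_of_pos huw (-g₁ + h₁))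

theorem hasRieszDecomp_of_fst_zero (hG : RDP G) (hg₁ : 0 ≤ g₁) (hg₂ : 0 ≤ g₂) (hh₁ : 0 ≤ h₁)
    (hh₂ : 0 ≤ h₂) (hgh : g₁ + g₂ = h₁ + h₂) :
    HasRieszDecomp (toLex ((0 : H), g₁)) (toLex (0, g₂)) (toLex (0, h₁)) (toLex (0, h₂)) := by
  obtain ⟨d₁₁, d₁₂, d₂₁, d₂₂, h₁₁, h₁₂, h₂₁, h₂₂, hd⟩ := hG g₁ g₂ h₁ h₂ hg₁ hg₂ hh₁ hh₂ hgh
  have hq : IsRefinement (0 : H) 0 0 0 0 0 0 0 := by simp [IsRefinement]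
  exact ⟨_, _, _, _, toLex_zero_nonneg_iff.2 h₁₁, toLex_zero_nonneg_iff.2 h₁₂,
    toLex_zero_nonneg_iff.2 h₂₁, toLex_zero_nonneg_iff.2 h₂₂, hq.toLex hd⟩

variable [IsDirectedOrder G]

theorem hasRieszDecomp_of_fst_zero_left [AddLeftMono G] (hG : RDP G) (hv : 0 < v)
    (hg₁ : 0 ≤ g₁) (hh₁ : 0 ≤ h₁) (hgh : g₁ + g₂ = h₁ + h₂) :
    HasRieszDecomp (toLex ((0 : H), g₁)) (toLex (v, g₂)) (toLex (0, h₁)) (toLex (v, h₂)) := by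
  obtain ⟨d₁₁, d₁₂, d₂₁, d₂₂, h₁₁, h₁₂, h₂₁, hd⟩ :=
    hG.exists_refinement_of_nonneg_left hg₁ hh₁ hgh
  have hq : IsRefinement (0 : H) v 0 v 0 0 0 v := by simp [IsRefinement]
  exact ⟨_, _, _, _, toLex_zero_nonneg_iff.2 h₁₁, toLex_zero_nonneg_iff.2 h₁₂,
    toLex_zero_nonneg_iff.2 h₂₁, toLex_nonneg_of_pos hv _, hq.toLex hd⟩

theorem hasRieszDecomp_of_fst_zero_right [AddRightMono G] (hG : RDP G) (hu : 0 < u)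
    (hg₂ : 0 ≤ g₂) (hh₂ : 0 ≤ h₂) (hgh : g₁ + g₂ = h₁ + h₂) :
    HasRieszDecomp (toLex (u, g₁)) (toLex ((0 : H), g₂)) (toLex (u, h₁)) (toLex (0, h₂)) := by
  obtain ⟨d₁₁, d₁₂, d₂₁, d₂₂, h₁₂, h₂₁, h₂₂, hd⟩ :=
    hG.exists_refinement_of_nonneg_right hg₂ hh₂ hgh
  have hq : IsRefinement u 0 u 0 u 0 0 0 := by simp [IsRefinement]
  exact ⟨_, _, _, _, toLex_nonneg_of_pos hu _, toLex_zero_nonneg_iff.2 h₁₂,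
    toLex_zero_nonneg_iff.2 h₂₁, toLex_zero_nonneg_iff.2 h₂₂, hq.toLex hd⟩

end Prod.Lex

open Prod.Lex in
theorem StrictRDP.rdp_lex {H G : Type*} [AddGroup H] [PartialOrder H] [AddGroup G]
    [PartialOrder G] [AddLeftMono G] [AddRightMono G] [IsDirectedOrder G] (hH : StrictRDP H)
    (hG : RDP G) : RDP (H ×ₗ G) := by
  intro a₁ a₂ b₁ b₂ ha₁ ha₂ hb₁ hb₂ hab
  obtain ⟨⟨u, g₁⟩, rfl⟩ := toLex.surjective a₁
  obtain ⟨⟨v, g₂⟩, rfl⟩ := toLex.surjective a₂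
  obtain ⟨⟨w, h₁⟩, rfl⟩ := toLex.surjective b₁
  obtain ⟨⟨x, h₂⟩, rfl⟩ := toLex.surjective b₂
  have huv : u + v = w + x := congrArg (fun c => (ofLex c).1) hab
  have hgh : g₁ + g₂ = h₁ + h₂ := congrArg (fun c => (ofLex c).2) hab
  rcases toLex_nonneg_iff.1 ha₁ with hu | ⟨rfl, hg₁⟩ <;>
    rcases toLex_nonneg_iff.1 hb₁ with hw | ⟨rfl, hh₁⟩
  · rcases toLex_nonneg_iff.1 ha₂ with hv | ⟨rfl, hg₂⟩ <;>
      rcases toLex_nonneg_iff.1 hb₂ with hx | ⟨rfl, hh₂⟩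
    · exact hasRieszDecomp_of_fst_pos hH hu hv hw hx huv hgh
    · rw [add_zero] at huv
      subst huv
      exact hasRieszDecomp_of_pos_neg_add ha₁ hb₂ hab (by rwa [neg_add_cancel_left])
    · rw [add_zero] at huv
      subst huv
      exact hasRieszDecomp_comm.2
        (hasRieszDecomp_of_pos_neg_add hb₁ ha₂ hab.symm (by rwa [neg_add_cancel_left]))
    · rw [add_zero, add_zero] at huv
      subst huv
      exact hasRieszDecomp_of_fst_zero_right hG hu hg₂ hh₂ hgh
  · exact hasRieszDecomp_comm.2
      (hasRieszDecomp_of_pos_neg_add hb₁ ha₂ hab.symm (by rwa [neg_zero, zero_add]))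
  · exact hasRieszDecomp_of_pos_neg_add ha₁ hb₂ hab (by rwa [neg_zero, zero_add])
  · rw [zero_add, zero_add] at huv
    subst huv
    rcases toLex_nonneg_iff.1 ha₂ with hv | ⟨rfl, hg₂⟩
    · exact hasRieszDecomp_of_fst_zero_left hG hv hg₁ hh₁ hgh
    · exact hasRieszDecomp_of_fst_zero hG hg₁ hg₂ hh₁ (toLex_zero_nonneg_iff.1 hb₂) hgh

open Prod.Lex in
theorem not_rdp1_lex_of_incomparable {H G : Type*} [AddCommGroup H] [PartialOrder H]
    [AddLeftMono H] [AddGroup G] [PartialOrder G] {a b : H} (ha : 0 ≤ a) (hb : 0 ≤ b)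
    (hab : ¬a ≤ b) (hba : ¬b ≤ a) {x y : G} (hx : 0 ≤ x) (hy : 0 ≤ y) (hxy : x + y ≠ y + x) :
    ¬RDP1 (H ×ₗ G) := by
  intro hR
  have hsum : toLex (a, (0 : G)) + toLex (b, 0) = toLex (b, 0) + toLex (a, 0) :=
    congrArg toLex (Prod.ext (add_comm a b) rfl)
  obtain ⟨c₁₁, c₁₂, c₂₁, -, -, h₁₂, h₂₁, -, e₁, -, e₃, -, hcomm⟩ :=
    hR _ _ _ _ (toLex_nonneg ha le_rfl) (toLex_nonneg hb le_rfl) (toLex_nonneg hb le_rfl)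
      (toLex_nonneg ha le_rfl) hsum
  obtain ⟨p₁₂, p₂₁⟩ := pos_of_incomparable (fst_nonneg h₁₂) (fst_nonneg h₂₁)
    (congrArg (fun c => (ofLex c).1) e₁) (congrArg (fun c => (ofLex c).1) e₃) hab hba
  have hx₁₂ : toLex (0, x) ≤ c₁₂ := toLex_le_toLex.2 (.inl p₁₂)
  have hy₂₁ : toLex (0, y) ≤ c₂₁ := toLex_le_toLex.2 (.inl p₂₁)
  exact hxy (congrArg (fun c => (ofLex c).2) (hcomm _ _ (toLex_zero_nonneg_iff.2 hx) hx₁₂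
    (toLex_zero_nonneg_iff.2 hy) hy₂₁))

theorem denselyOrdered_of_exists_pos_lt {A : Type*} [AddCommGroup A] [PartialOrder A]
    [IsOrderedAddMonoid A] (h : ∀ a : A, 0 < a → ∃ b, 0 < b ∧ b < a) : DenselyOrdered A where
  dense a c hac := by
    obtain ⟨b, hb, hbc⟩ := h (c - a) (sub_pos.2 hac)
    exact ⟨a + b, lt_add_of_pos_right a hb, lt_sub_iff_add_lt'.1 hbc⟩

theorem strictRDP_of_denselyOrdered {A : Type*} [AddCommGroup A] [LinearOrder A]
    [IsOrderedAddMonoid A] [DenselyOrdered A] : StrictRDP A := by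
  intro u v w x hu hv hw hx h
  have hux : u - x < w := by
    rw [sub_lt_iff_lt_add, ← h]
    exact lt_add_of_pos_right u hv
  obtain ⟨q, hlq, hqm⟩ :=
    exists_between (max_lt (lt_min hu hw) (lt_min (sub_lt_self u hx) hux))
  rw [max_lt_iff] at hlq
  rw [lt_min_iff] at hqm
  have hv' : v = w + x - u := eq_sub_of_add_eq' h
  refine ⟨q, u - q, w - q, x - u + q, hlq.1, sub_pos.2 hqm.1, sub_pos.2 hqm.2,
    (sub_pos.2 hlq.2).trans_eq (by abel), ?_, ?_, ?_, ?_⟩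
  · abel
  · rw [hv']; abel
  · abel
  · abel

namespace StrictPi

variable {I : Type*} {A : I → Type*}

theorem le_def [∀ i, PartialOrder (A i)] {a b : StrictPi A} :
    a ≤ b ↔ a = b ∨ ∀ i, a i < b i :=
  Iff.rfl

theorem lt_iff [Nonempty I] [∀ i, PartialOrder (A i)] {a b : StrictPi A} :
    a < b ↔ ∀ i, a i < b i := by
  refine ⟨fun h => (le_def.1 h.le).resolve_left h.ne, fun h => lt_of_le_of_ne (.inr h) ?_⟩
  obtain ⟨i⟩ := ‹Nonempty I›
  exact fun hab => (h i).ne (congrFun hab i)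

instance [∀ i, AddCommGroup (A i)] [∀ i, PartialOrder (A i)] [∀ i, IsOrderedAddMonoid (A i)] :
    IsOrderedAddMonoid (StrictPi A) where
  add_le_add_left a b hab c := by
    rcases hab with rfl | hab
    exacts [le_rfl, .inr fun i => add_lt_add_left (hab i) (c i)]

theorem strictRDP [Nonempty I] [∀ i, AddCommGroup (A i)] [∀ i, PartialOrder (A i)]
    (h : ∀ i, StrictRDP (A i)) : StrictRDP (StrictPi A) := by
  intro a₁ a₂ b₁ b₂ ha₁ ha₂ hb₁ hb₂ hab
  choose c₁₁ c₁₂ c₂₁ c₂₂ h₁₁ h₁₂ h₂₁ h₂₂ hc using fun i =>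
    h i (a₁ i) (a₂ i) (b₁ i) (b₂ i) (lt_iff.1 ha₁ i) (lt_iff.1 ha₂ i) (lt_iff.1 hb₁ i)
      (lt_iff.1 hb₂ i) (congrFun hab i)
  exact ⟨c₁₁, c₁₂, c₂₁, c₂₂, lt_iff.2 h₁₁, lt_iff.2 h₁₂, lt_iff.2 h₂₁, lt_iff.2 h₂₂,
    funext fun i => (hc i).1, funext fun i => (hc i).2.1, funext fun i => (hc i).2.2.1,
    funext fun i => (hc i).2.2.2⟩

theorem exists_nonneg_incomparable [Nontrivial I] [∀ i, AddCommGroup (A i)]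
    [∀ i, LinearOrder (A i)] [∀ i, IsOrderedAddMonoid (A i)] [∀ i, Nontrivial (A i)] :
    ∃ a b : StrictPi A, 0 ≤ a ∧ 0 ≤ b ∧ ¬a ≤ b ∧ ¬b ≤ a := by
  classical
  obtain ⟨i₀, j₀, hij⟩ := exists_pair_ne I
  choose e he using fun i => exists_zero_lt (α := A i)
  let b : StrictPi A := Function.update e i₀ (e i₀ + e i₀)
  have hbi₀ : e i₀ < b i₀ := by
    rw [show b i₀ = e i₀ + e i₀ from Function.update_self ..]
    exact lt_add_of_pos_right _ (he i₀)
  have hbj₀ : b j₀ = e j₀ := Function.update_of_ne hij.symm ..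
  have hbpos : ∀ i, 0 < b i := fun i => by
    rcases eq_or_ne i i₀ with rfl | hi
    exacts [(he i).trans hbi₀, (Function.update_of_ne hi ..).trans_gt (he i)]
  refine ⟨e, b, .inr he, .inr hbpos, ?_, ?_⟩ <;> rintro (h | h)
  · exact hbi₀.ne (congrFun h i₀)
  · exact (h j₀).ne hbj₀.symm
  · exact hbi₀.ne (congrFun h i₀).symm
  · exact (h i₀).not_gt hbi₀

end StrictPi

/-- Let `{Aᵢ}` (with `|I| > 1`) be a family of non-trivial Abelian linearly
ordered groups such that every strictly positive element of each `Aᵢ` dominates a strictly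
positive element. Let `A = ∏ i, Aᵢ` carry the strict product ordering and let `G` be a
non-Abelian directed po-group with RDP₁. Then the lexicographic product `A ×ₗ G`
satisfies RDP but RDP₁ fails in it. -/
theorem rdp_not_rdp1_lex_strictPi {I : Type*} [Nontrivial I] (A : I → Type*)
    [∀ i, AddCommGroup (A i)] [∀ i, LinearOrder (A i)] [∀ i, IsOrderedAddMonoid (A i)]
    [∀ i, Nontrivial (A i)]
    (hdense : ∀ i, ∀ a : A i, 0 < a → ∃ a₀ : A i, 0 < a₀ ∧ a₀ < a)
    {G : Type*} [AddGroup G] [PartialOrder G]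
    [CovariantClass G G (· + ·) (· ≤ ·)]
    [CovariantClass G G (Function.swap (· + ·)) (· ≤ ·)]
    (hdir : ∀ x y : G, ∃ z : G, x ≤ z ∧ y ≤ z)
    (hna : ∃ x y : G, x + y ≠ y + x)
    (hG : RDP1 G) :
    RDP (StrictPi A ×ₗ G) ∧ ¬ RDP1 (StrictPi A ×ₗ G) := by
  have : IsDirectedOrder G := ⟨hdir⟩
  have hA (i : I) : StrictRDP (A i) :=
    have := denselyOrdered_of_exists_pos_lt (hdense i)
    strictRDP_of_denselyOrdered
  obtain ⟨a, b, ha, hb, hab, hba⟩ := StrictPi.exists_nonneg_incomparable (A := A)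
  obtain ⟨x, y, hx, hy, hxy⟩ := exists_nonneg_add_ne_add hna
  exact ⟨(StrictPi.strictRDP hA).rdp_lex hG.rdp,
    not_rdp1_lex_of_incomparable ha hb hab hba hx hy hxy⟩
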